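/- Let M = (S, I) be a k-colorable paving matroid of rank 3. Then there exists a (2k−1)-colorable partition matroid N = (S, J) that is a rank preserving reduction of M, i.e., N ⪯_r M and χ(N) ≤ 2k−1. -/

import Mathlib

open Set

variable {α : Type*}

/-- The ground set of the matroid `M` can be partitioned into `k` independent sets. -/
def Matroid.IsColorable (M : Matroid α) (k : ℕ) : Prop :=
  ∃ I : Fin k → Set α, (∀ i, M.Indep (I i)) ∧ (⋃ i, I i) = M.E ∧
    Pairwise fun i j => Disjoint (I i) (I j)

/-- The coloring number of the matroid `M`: the minimum number of independent sets into
which the ground set can be partitioned. -/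
noncomputable def Matroid.chi (M : Matroid α) : ℕ := sInf {k | M.IsColorable k}

/-- The (extended, cardinality-valued) rank of the matroid `M`. -/
noncomputable def Matroid.rkE (M : Matroid α) : ℕ∞ := ⨆ I ∈ {I | M.Indep I}, I.encard

/-- `N` is the partition matroid determined by the partition `P` of its ground set:
a set is independent iff it meets every class of `P` in at most one element. -/
def Matroid.IsPartitionMatroid (N : Matroid α) (P : Set (Set α)) : Prop :=
  ⋃₀ P = N.E ∧ (∀ c ∈ P, ∀ c' ∈ P, c ≠ c' → Disjoint c c') ∧
    ∀ X, N.Indep X ↔ X ⊆ N.E ∧ ∀ c ∈ P, (X ∩ c).encard ≤ 1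

/-- `N` is a reduction of `M` (written `N ⪯ M`): every `N`-independent set is
`M`-independent. -/
def Matroid.Reduction (N M : Matroid α) : Prop :=
  N.E = M.E ∧ ∀ I, N.Indep I → M.Indep I

/-- `M` is a paving matroid of rank `r`: it has rank `r` and every subset of the ground
set of size at most `r - 1` is independent. -/
def Matroid.IsPavingOfRank (M : Matroid α) (r : ℕ) : Prop :=
  M.rkE = (r : ℕ∞) ∧ ∀ X ⊆ M.E, X.encard ≤ ((r - 1 : ℕ) : ℕ∞) → M.Indep X

/-- A cut (cocircuit) of the matroid `M`: an inclusionwise minimal subset of the ground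
set intersecting every basis. -/
def Matroid.IsCut (M : Matroid α) (X : Set α) : Prop :=
  X ⊆ M.E ∧ (∀ B, M.IsBase B → (X ∩ B).Nonempty) ∧
    ∀ Y, Y ⊂ X → ∃ B, M.IsBase B ∧ Y ∩ B = ∅

/-!
Fix a base `{p, u, v}`. As `M` is paving of rank 3, every pair `{p, x}` is independent, so the
lines `cl {p, x}` through `p` partition `E \ {p}`, and `{p, a, b}` is independent as soon as `a`
and `b` lie on different lines. A line has rank 2, so each of the `k` colour classes meets it in
at most two points: a line carries at most `2k - 1` points besides `p`, while `|E| ≤ 3k`. These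
bounds let the (at least two) lines be grouped into two nonempty blocks `A`, `B` of at most
`2k - 1` points each, and the partition matroid with classes `A`, `B`, `{p}` is a rank preserving
reduction of `M`.
-/

namespace Finset

variable {β γ : Type*}

theorem exists_subset_le_sum_le_add (s : Finset β) (f : β → ℕ) {m d : ℕ}
    (hf : ∀ b ∈ s, f b ≤ d + 1) (hm : m ≤ ∑ b ∈ s, f b) :
    ∃ t ⊆ s, m ≤ ∑ b ∈ t, f b ∧ ∑ b ∈ t, f b ≤ m + d := by
  classical
  induction s using Finset.induction_on generalizing m with
  | empty => exact ⟨∅, subset_refl _, by simpa using hm, by simp⟩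
  | @insert a s ha ih =>
    rw [sum_insert ha] at hm
    have hfa := hf a (mem_insert_self a s)
    by_cases hma : m ≤ f a
    · rcases Nat.eq_zero_or_pos m with rfl | hm0
      · exact ⟨∅, empty_subset _, by simp, by simp⟩
      · exact ⟨{a}, by simp, by simpa using hma, by simp; omega⟩
    · obtain ⟨t, hts, hlo, hhi⟩ :=
        ih (m := m - f a) (fun b hb => hf b (mem_insert_of_mem hb)) (by omega)
      refine ⟨insert a t, insert_subset_insert a hts, ?_, ?_⟩ <;>
        rw [sum_insert fun h => ha (hts h)] <;> omega

theorem exists_split_sum_le [DecidableEq β] (s : Finset β) (f : β → ℕ) {c : ℕ}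
    (hf : ∀ b ∈ s, f b ≤ c) (hs : 2 ≤ #s) (hsum : 2 * ∑ b ∈ s, f b ≤ 3 * c + 1) :
    ∃ t ⊆ s, t.Nonempty ∧ (s \ t).Nonempty ∧
      ∑ b ∈ t, f b ≤ c ∧ ∑ b ∈ s \ t, f b ≤ c := by
  have hcompl : ∀ t ⊆ s, ∑ b ∈ s \ t, f b + ∑ b ∈ t, f b = ∑ b ∈ s, f b :=
    fun t ht => sum_sdiff ht
  by_cases hbig : ∃ b ∈ s, (∑ b ∈ s, f b) - c ≤ f b
  · obtain ⟨b, hb, hfb⟩ := hbig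
    have := hcompl {b} (singleton_subset_iff.2 hb)
    rw [sum_singleton] at this
    refine ⟨{b}, singleton_subset_iff.2 hb, singleton_nonempty b, ?_, by simpa using hf b hb,
      by omega⟩
    rw [← card_pos, card_sdiff_of_subset (singleton_subset_iff.2 hb), card_singleton]
    omega
  · push Not at hbig
    obtain ⟨b₀, hb₀⟩ : s.Nonempty := card_pos.1 (by omega)
    have hb₀' := hbig b₀ hb₀
    -- every block is smaller than `(∑ f) - c`, so some subfamily sums into `[(∑ f) - c, c]`
    obtain ⟨t, hts, hlo, hhi⟩ := exists_subset_le_sum_le_add s f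
      (m := (∑ b ∈ s, f b) - c) (d := (∑ b ∈ s, f b) - c - 2)
      (fun b hb => by have := hbig b hb; omega) (by omega)
    have := hcompl t hts
    have ht : ∑ b ∈ t, f b ≠ 0 := by omega
    have hst : ∑ b ∈ s \ t, f b ≠ 0 := by omega
    exact ⟨t, hts, nonempty_of_sum_ne_zero ht, nonempty_of_sum_ne_zero hst, by omega, by omega⟩

theorem exists_split_filter_card_le [DecidableEq γ] (s : Finset β) (g : β → γ) {c : ℕ}
    (hfib : ∀ y, #{x ∈ s | g x = y} ≤ c) (himg : 2 ≤ #(s.image g))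
    (hs : 2 * #s ≤ 3 * c + 1) :
    ∃ t : Finset γ, {x ∈ s | g x ∈ t}.Nonempty ∧ {x ∈ s | g x ∉ t}.Nonempty ∧
      #{x ∈ s | g x ∈ t} ≤ c ∧ #{x ∈ s | g x ∉ t} ≤ c := by
  obtain ⟨t, hts, ⟨y, hyt⟩, ⟨z, hzt⟩, hlt, hrt⟩ := exists_split_sum_le (s.image g)
    (fun y => #{x ∈ s | g x = y}) (fun y _ => hfib y) himg (by rwa [← card_eq_sum_card_image])
  have hnot : {x ∈ s | g x ∉ t} = {x ∈ s | g x ∈ s.image g \ t} :=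
    filter_congr fun x hx => by simp [mem_image_of_mem g hx]
  rw [sum_card_fiberwise_eq_card_filter] at hlt hrt
  obtain ⟨x, hx, rfl⟩ := mem_image.1 (hts hyt)
  obtain ⟨x', hx', rfl⟩ := mem_image.1 (mem_sdiff.1 hzt).1
  exact ⟨t, ⟨x, by simpa [hx] using hyt⟩, ⟨x', by simpa [hx'] using (mem_sdiff.1 hzt).2⟩,
    hlt, hnot ▸ hrt⟩

end Finset

namespace Matroid

variable {M N : Matroid α} {k r : ℕ} {X A B : Set α} {p u v a b x y : α}

lemma rkE_eq_eRank (M : Matroid α) : M.rkE = M.eRank := by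
  refine le_antisymm (iSup₂_le fun I hI => hI.encard_le_eRank) ?_
  obtain ⟨B, hB⟩ := M.exists_isBase
  rw [← hB.encard_eq_eRank]
  exact le_iSup₂ (f := fun I (_ : I ∈ {I | M.Indep I}) => I.encard) B hB.indep

lemma Reduction.eRank_le (h : N.Reduction M) : N.eRank ≤ M.eRank := by
  obtain ⟨B, hB⟩ := N.exists_isBase
  rw [← hB.encard_eq_eRank]
  exact (h.2 B hB.indep).encard_le_eRank

lemma IsColorable.encard_le_mul_eRk (h : M.IsColorable k) (hX : X ⊆ M.E) :
    X.encard ≤ k * M.eRk X := by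
  obtain ⟨I, hI, hcover, -⟩ := h
  have hXI : X = ⋃ i, I i ∩ X := by rw [← iUnion_inter, hcover, inter_eq_right.2 hX]
  calc X.encard = (⋃ i, I i ∩ X).encard := by rw [← hXI]
    _ ≤ ∑ i, (I i ∩ X).encard := encard_iUnion_le_of_fintype _
    _ ≤ ∑ _i : Fin k, M.eRk X :=
        Finset.sum_le_sum fun i _ => ((hI i).subset inter_subset_left).encard_le_eRk_of_subset
          inter_subset_right
    _ = k * M.eRk X := by simp

lemma IsColorable.encard_ground_le (h : M.IsColorable k) : M.E.encard ≤ k * M.eRank :=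
  M.eRk_ground ▸ h.encard_le_mul_eRk subset_rfl

lemma IsColorable.card_le_of_subset_closure_pair_sdiff (h : M.IsColorable k)
    (hpa : M.Indep {p, a}) {F : Finset α} (hF : ↑F ⊆ M.closure {p, a} \ {p}) :
    F.card ≤ 2 * k - 1 := by
  have hline : (M.closure {p, a} \ {p}).encard + 1 ≤ 2 * k := by
    rw [encard_sdiff_singleton_add_one (M.mem_closure_of_mem (mem_insert p _) hpa.subset_ground)]
    refine (h.encard_le_mul_eRk (M.closure_subset_ground _)).trans ?_
    rw [eRk_closure_eq, hpa.eRk_eq_encard, mul_comm]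
    gcongr
    exact (encard_insert_le _ _).trans (by rw [encard_singleton]; rfl)
  have := (add_le_add_left (encard_le_encard hF) 1).trans hline
  rw [encard_coe_eq_coe_finsetCard] at this
  norm_cast at this
  omega

def unifOneOn (E : Set α) : Matroid α :=
  (IndepMatroid.ofBddAugment E (fun I => I ⊆ E ∧ I.encard ≤ 1)
    ⟨empty_subset E, by simp⟩
    (fun _ _ hJ hIJ => ⟨hIJ.trans hJ.1, (encard_le_encard hIJ).trans hJ.2⟩)
    (fun I J hI hJ hlt => by
      obtain rfl : I = ∅ := encard_eq_zero.1 <| Order.lt_one_iff.1 (hlt.trans_le hJ.2)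
      obtain ⟨e, he⟩ := nonempty_of_encard_ne_zero (by simpa using hlt.ne')
      exact ⟨e, he, notMem_empty e, by simpa using hJ.1 he⟩)
    ⟨1, fun _ hI => hI.2⟩ (fun _ hI => hI.1)).matroid

@[simp] lemma unifOneOn_ground (E : Set α) : (unifOneOn E).E = E := rfl

@[simp] lemma unifOneOn_indep_iff {E I : Set α} :
    (unifOneOn E).Indep I ↔ I ⊆ E ∧ I.encard ≤ 1 := Iff.rfl

lemma exists_isPartitionMatroid (P : Set (Set α)) (hP : P.PairwiseDisjoint id) :
    ∃ N : Matroid α, N.IsPartitionMatroid P := by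
  have hdisj : Pairwise fun c c' : P => Disjoint (unifOneOn c.1).E (unifOneOn c'.1).E :=
    fun c c' hne => hP c.2 c'.2 (Subtype.coe_ne_coe.2 hne)
  refine ⟨Matroid.disjointSigma _ hdisj, ?_, hP, fun X => ?_⟩
  · simp [sUnion_eq_iUnion]
  · simp [and_comm]

lemma closure_pair_eq_of_mem_closure (hpb : M.Indep {p, b}) (hbp : b ≠ p)
    (hb : b ∈ M.closure {p, a}) : M.closure {p, b} = M.closure {p, a} := by
  have hbp' : b ∉ M.closure {p} := by
    simpa [pair_sdiff_right hbp.symm] using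
      hpb.notMem_closure_sdiff_of_mem (mem_insert_of_mem p rfl)
  have := closure_insert_congr (M := M) (X := {p}) (e := b) (f := a)
    ⟨by rwa [pair_comm], hbp'⟩
  rwa [pair_comm, pair_comm a] at this

lemma indep_triple_of_closure_pair_ne (hpa : M.Indep {p, a}) (hpb : M.Indep {p, b})
    (hbp : b ≠ p) (hne : M.closure {p, a} ≠ M.closure {p, b}) : M.Indep {p, a, b} := by
  have hb : b ∉ M.closure {p, a} :=
    fun hb => hne (closure_pair_eq_of_mem_closure hpb hbp hb).symm
  rw [pair_comm a b, insert_comm p b, hpa.insert_indep_iff]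
  exact .inl ⟨hpb.subset_ground (mem_insert_of_mem p rfl), hb⟩

lemma Indep.closure_pair_ne (h : M.Indep {p, u, v}) (hpv : p ≠ v) (huv : u ≠ v) :
    M.closure {p, u} ≠ M.closure {p, v} := by
  have h' : M.Indep (insert v {p, u}) := by rwa [Set.insert_comm v p, Set.pair_comm v u]
  have hv := (Matroid.insert_indep_iff.1 h').2 (by simp [hpv.symm, huv.symm])
  exact fun hcl => hv.2 (hcl ▸ M.mem_closure_of_mem' (mem_insert_of_mem p rfl) hv.1)

lemma IsPartitionMatroid.exists_subset_triple (hN : N.IsPartitionMatroid {A, B, {p}})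
    (hA : A.Nonempty) (hB : B.Nonempty) (hX : N.Indep X) :
    ∃ a ∈ A, ∃ b ∈ B, X ⊆ {p, a, b} := by
  obtain ⟨hXE, hXc⟩ := (hN.2.2 X).1 hX
  have hpick : ∀ C ∈ ({A, B, {p}} : Set (Set α)), C.Nonempty →
      ∃ c ∈ C, X ∩ C ⊆ {c} := by
    intro C hC hCne
    obtain h | ⟨c, hc⟩ := encard_le_one_iff_eq.1 (hXc C hC)
    · obtain ⟨c, hc⟩ := hCne
      exact ⟨c, hc, h ▸ empty_subset _⟩
    · exact ⟨c, (hc.symm.subset rfl).2, hc.subset⟩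
  obtain ⟨a, ha, hXA⟩ := hpick A (by simp) hA
  obtain ⟨b, hb, hXB⟩ := hpick B (by simp) hB
  refine ⟨a, ha, b, hb, fun x hx => ?_⟩
  rw [← hN.1] at hXE
  obtain rfl | hxA | hxB : x = p ∨ x ∈ A ∨ x ∈ B := by simpa using hXE hx
  · exact .inl rfl
  · exact .inr (.inl (hXA ⟨hx, hxA⟩))
  · exact .inr (.inr (hXB ⟨hx, hxB⟩))

lemma IsPartitionMatroid.indep_triple (hN : N.IsPartitionMatroid {A, B, {p}})
    (hAB : Disjoint A B) (hpA : p ∉ A) (hpB : p ∉ B) (ha : a ∈ A) (hb : b ∈ B) :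
    N.Indep {p, a, b} := by
  have hbA : b ∉ A := disjoint_right.1 hAB hb
  have haB : a ∉ B := disjoint_left.1 hAB ha
  rw [hN.2.2, ← hN.1]
  refine ⟨by simp [insert_subset_iff, ha, hb], ?_⟩
  rintro c (rfl | rfl | rfl) <;> rw [encard_le_one_iff] <;> aesop

lemma IsPartitionMatroid.reduction_of_indep_triple (hN : N.IsPartitionMatroid {A, B, {p}})
    (hA : A.Nonempty) (hB : B.Nonempty) (hp : p ∈ M.E) (hABE : A ∪ B = M.E \ {p})
    (hind : ∀ a ∈ A, ∀ b ∈ B, M.Indep {p, a, b}) : N.Reduction M := by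
  refine ⟨?_, fun X hX => ?_⟩
  · rw [← hN.1, sUnion_insert, sUnion_pair, ← union_assoc, hABE,
      sdiff_union_of_subset (singleton_subset_iff.2 hp)]
  obtain ⟨a, ha, b, hb, hX⟩ := hN.exists_subset_triple hA hB hX
  exact (hind a ha b hb).subset hX

lemma IsPavingOfRank.indep_pair (h : M.IsPavingOfRank r) (hr : 3 ≤ r) (hx : x ∈ M.E)
    (hy : y ∈ M.E) : M.Indep {x, y} := by
  refine h.2 _ (pair_subset hx hy) ((encard_insert_le _ _).trans ?_)
  rw [encard_singleton]
  exact_mod_cast (by omega : 1 + 1 ≤ r - 1)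

open Finset in
theorem IsPavingOfRank.exists_split_with_indep_transversals (hpav : M.IsPavingOfRank 3)
    (hcol : M.IsColorable k) (hpuv : M.Indep {p, u, v}) (hpu : p ≠ u) (hpv : p ≠ v)
    (huv : u ≠ v) :
    ∃ A B : Set α, A.Nonempty ∧ B.Nonempty ∧ Disjoint A B ∧ A ∪ B = M.E \ {p} ∧
      A.encard ≤ (2 * k - 1 : ℕ) ∧ B.encard ≤ (2 * k - 1 : ℕ) ∧
      ∀ a ∈ A, ∀ b ∈ B, M.Indep {p, a, b} := by
  classical
  have hpE : p ∈ M.E := hpuv.subset_ground (by simp)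
  have hpair : ∀ y ∈ M.E, M.Indep {p, y} := fun y hy => hpav.indep_pair le_rfl hpE hy
  have hEk : M.E.encard ≤ (3 * k : ℕ) := by
    simpa [← rkE_eq_eRank, hpav.1, mul_comm] using hcol.encard_ground_le
  have hEfin : M.E.Finite := finite_of_encard_le_coe hEk
  set D := hEfin.toFinset.erase p
  have hmemD : ∀ y, y ∈ D ↔ y ≠ p ∧ y ∈ M.E := by simp [D]
  have hD : #D + 1 ≤ 3 * k := by
    rw [card_erase_add_one (by simpa using hpE)]
    exact_mod_cast hEfin.encard_eq_coe_toFinset_card ▸ hEk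
  let line : α → Set α := fun y => M.closure {p, y}
  have hline : ∀ L, #{y ∈ D | line y = L} ≤ 2 * k - 1 := by
    intro L
    obtain h | ⟨x, hx⟩ := Finset.eq_empty_or_nonempty {y ∈ D | line y = L}
    · simp [h]
    obtain ⟨hxD, rfl⟩ := mem_filter.1 hx
    refine hcol.card_le_of_subset_closure_pair_sdiff (hpair x ((hmemD x).1 hxD).2) fun y hy => ?_
    obtain ⟨hyD, hyx⟩ := mem_filter.1 hy
    obtain ⟨hyp, hyE⟩ := (hmemD y).1 hyD
    have hy : y ∈ line y := M.mem_closure_of_mem' (Set.mem_insert_of_mem p rfl) hyE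
    exact ⟨hyx.subset hy, hyp⟩
  have himg : 2 ≤ #(D.image line) := one_lt_card.2
    ⟨line u, mem_image_of_mem line ((hmemD u).2 ⟨hpu.symm, hpuv.subset_ground (by simp)⟩),
      line v, mem_image_of_mem line ((hmemD v).2 ⟨hpv.symm, hpuv.subset_ground (by simp)⟩),
      hpuv.closure_pair_ne hpv huv⟩
  obtain ⟨t, hA, hB, hAk, hBk⟩ := exists_split_filter_card_le D line hline himg
    (by have := card_image_le (s := D) (f := line); omega)
  refine ⟨_, _, coe_nonempty.2 hA, coe_nonempty.2 hB,
    disjoint_coe.2 (disjoint_filter_filter_not _ _ _), ?_,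
    by rw [encard_coe_eq_coe_finsetCard]; exact_mod_cast hAk,
    by rw [encard_coe_eq_coe_finsetCard]; exact_mod_cast hBk, fun a ha b hb => ?_⟩
  · rw [← coe_union, filter_union_filter_not_eq, coe_erase, Finite.coe_toFinset]
  obtain ⟨haD, hat⟩ := mem_filter.1 ha
  obtain ⟨hbD, hbt⟩ := mem_filter.1 hb
  obtain ⟨hbp, hbE⟩ := (hmemD b).1 hbD
  exact indep_triple_of_closure_pair_ne (hpair a ((hmemD a).1 haD).2) (hpair b hbE) hbp
    fun h => hbt (show line b ∈ t by rwa [← show line a = line b from h])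

end Matroid

theorem statement_9_general (M : Matroid α) (k : ℕ)
    (hpav : M.IsPavingOfRank 3) (hcol : M.IsColorable k) :
    ∃ (N : Matroid α) (P : Set (Set α)), N.IsPartitionMatroid P ∧ N.Reduction M ∧
      N.rkE = M.rkE ∧ ∀ c ∈ P, c.encard ≤ ((2 * k - 1 : ℕ) : ℕ∞) := by
  have hrank : M.eRank = 3 := M.rkE_eq_eRank ▸ hpav.1
  obtain ⟨T, hT⟩ := M.exists_isBase
  obtain ⟨p, u, v, hpu, hpv, huv, rfl⟩ := encard_eq_three.1 (hT.encard_eq_eRank.trans hrank)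
  obtain ⟨A, B, ⟨a, ha⟩, ⟨b, hb⟩, hAB, hABE, hAk, hBk, hind⟩ :=
    hpav.exists_split_with_indep_transversals hcol hT.indep hpu hpv huv
  have hpA : p ∉ A := fun h => (hABE.subset (mem_union_left B h)).2 rfl
  have hpB : p ∉ B := fun h => (hABE.subset (mem_union_right A h)).2 rfl
  obtain ⟨N, hN⟩ := Matroid.exists_isPartitionMatroid {A, B, {p}} <| by
    simp [PairwiseDisjoint, pairwise_insert, Function.onFun, hAB, hAB.symm, hpA, hpB]
  have hred :=
    hN.reduction_of_indep_triple ⟨a, ha⟩ ⟨b, hb⟩ (hT.subset_ground (by simp)) hABE hind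
  refine ⟨N, _, hN, hred, ?_, ?_⟩
  · rw [M.rkE_eq_eRank, N.rkE_eq_eRank, hrank]
    refine le_antisymm (hrank ▸ hred.eRank_le) ?_
    have hpab : ({p, a, b} : Set α).encard = 3 := encard_eq_three.2
      ⟨p, a, b, fun h => hpA (h ▸ ha), fun h => hpB (h ▸ hb),
        fun h => disjoint_left.1 hAB ha (h ▸ hb), rfl⟩
    rw [← hpab]
    exact (hN.indep_triple hAB hpA hpB ha hb).encard_le_eRank
  · rintro c (rfl | rfl | rfl)
    · exact hAk
    · exact hBk
    · rw [encard_singleton]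
      exact (one_le_encard_iff_nonempty.2 ⟨a, ha⟩).trans hAk

/-- A `k`-colorable paving matroid of rank `3` admits a rank preserving reduction to a
`(2k-1)`-colorable partition matroid. -/
theorem statement_9 (M : Matroid α) (hfin : M.E.Finite) (k : ℕ)
    (hpav : M.IsPavingOfRank 3) (hcol : M.IsColorable k) :
    ∃ (N : Matroid α) (P : Set (Set α)), N.IsPartitionMatroid P ∧ N.Reduction M ∧
      N.rkE = M.rkE ∧ ∀ c ∈ P, c.encard ≤ ((2 * k - 1 : ℕ) : ℕ∞) :=
  statement_9_general M k hpav hcol
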